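/- Let ω = e^{2πi/3}. For every k ∈ ℂ with k ≠ 0 and k⁶ ≠ -1, the diagonal matrix 𝒵(k) = diag(z₁(k), z₂(k), z₃(k)) satisfies the three symmetry identities: 𝒵(k) = 𝒜 · 𝒵(ωk) · 𝒜⁻¹, 𝒵(k) = ℬ · conj(𝒵(conj(k))) · ℬ, and 𝒵(k) = ℬ · 𝒵(1/k) · ℬ, where conj denotes entrywise complex conjugation. -/
import Mathlib


open Complex

/-- The primitive cube root of unity `ω = e^{2πi/3}`. -/
noncomputable def ω : ℂ := Complex.exp (2 * Real.pi * Complex.I / 3)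

/-- `l_j(k) = (1/√3)(ω^j k + 1/(ω^j k))`. -/
noncomputable def lfun (j : ℕ) (k : ℂ) : ℂ :=
  (1 / (Real.sqrt 3 : ℂ)) * (ω ^ j * k + 1 / (ω ^ j * k))

/-- `λ(k) = (1/(3√3))(k³ + 1/k³)`. -/
noncomputable def lamfun (k : ℂ) : ℂ :=
  (1 / (3 * (Real.sqrt 3 : ℂ))) * (k ^ 3 + 1 / k ^ 3)

/-- `z_j(k) = √3 ((ω^j k)² + (ω^j k)⁻²)/(k³ + k⁻³)`. -/
noncomputable def zfun (j : ℕ) (k : ℂ) : ℂ :=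
  (Real.sqrt 3 : ℂ) * ((ω ^ j * k) ^ 2 + ((ω ^ j * k) ^ 2)⁻¹) / (k ^ 3 + (k ^ 3)⁻¹)

/-- The matrix `P(k)` with rows `(1,1,1)`, `(l₁,l₂,l₃)`, `(l₁²,l₂²,l₃²)`. -/
noncomputable def Pmat (k : ℂ) : Matrix (Fin 3) (Fin 3) ℂ :=
  !![1, 1, 1;
     lfun 1 k, lfun 2 k, lfun 3 k;
     (lfun 1 k) ^ 2, (lfun 2 k) ^ 2, (lfun 3 k) ^ 2]

/-- The cyclic permutation matrix `𝒜`. -/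
def matA : Matrix (Fin 3) (Fin 3) ℂ := !![0, 0, 1; 1, 0, 0; 0, 1, 0]

/-- The transposition matrix `ℬ`. -/
def matB : Matrix (Fin 3) (Fin 3) ℂ := !![0, 1, 0; 1, 0, 0; 0, 0, 1]

lemma omega_pow_three : ω ^ 3 = 1 := by
  rw [ω, ← Complex.exp_nat_mul]
  rw [show ((3:ℕ) : ℂ) * (2 * Real.pi * Complex.I / 3) = 2 * Real.pi * Complex.I by
    push_cast; ring]
  exact Complex.exp_two_pi_mul_I

lemma conj_omega : (starRingEnd ℂ) ω = ω ^ 2 := by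
  rw [ω, ← Complex.exp_conj, ← Complex.exp_nat_mul]
  have h1 : (starRingEnd ℂ) (2 * Real.pi * Complex.I / 3)
      = -(2 * Real.pi * Complex.I / 3) := by
    rw [show (2 * (Real.pi:ℂ) * Complex.I / 3) = ((2:ℝ)*Real.pi/3 : ℝ) * Complex.I by
      push_cast; ring]
    rw [map_mul, Complex.conj_I, Complex.conj_ofReal]
    ring
  rw [h1, show ((2:ℕ):ℂ) * (2 * ↑Real.pi * Complex.I / 3)
      = -(2 * ↑Real.pi * Complex.I / 3) + 2 * ↑Real.pi * Complex.I by push_cast; ring]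
  rw [Complex.exp_add, Complex.exp_two_pi_mul_I, mul_one]

lemma addinv {a b : ℂ} (h : a * b = 1) : a + a⁻¹ = b + b⁻¹ := by
  have ha : a = b⁻¹ := eq_inv_of_mul_eq_one_left h
  have hb : b = a⁻¹ := eq_inv_of_mul_eq_one_right h
  rw [← ha, ← hb, add_comm]

lemma omk_cube (k : ℂ) : (ω * k) ^ 3 = k ^ 3 := by
  linear_combination k ^ 3 * omega_pow_three

lemma zshift1 (k : ℂ) : zfun 1 (ω * k) = zfun 2 k := by
  unfold zfun
  rw [omk_cube, show ω^1*(ω*k) = ω^2*k by ring]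

lemma zshift2 (k : ℂ) : zfun 2 (ω * k) = zfun 3 k := by
  unfold zfun
  rw [omk_cube, show ω^2*(ω*k) = ω^3*k by ring]

lemma zshift3 (k : ℂ) : zfun 3 (ω * k) = zfun 1 k := by
  unfold zfun
  rw [omk_cube, show ω^3*(ω*k) = ω^1*k by linear_combination ω * k * omega_pow_three]

lemma zconj (j m : ℕ) (h : ((starRingEnd ℂ) ω) ^ j = ω ^ m) (k : ℂ) :
    (starRingEnd ℂ) (zfun j ((starRingEnd ℂ) k)) = zfun m k := by
  unfold zfun
  simp only [map_div₀, map_mul, map_add, map_inv₀, map_pow, Complex.conj_conj,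
    Complex.conj_ofReal, h]

lemma zconj1 (k : ℂ) : (starRingEnd ℂ) (zfun 1 ((starRingEnd ℂ) k)) = zfun 2 k := by
  apply zconj; rw [conj_omega]; ring

lemma zconj2 (k : ℂ) : (starRingEnd ℂ) (zfun 2 ((starRingEnd ℂ) k)) = zfun 1 k := by
  apply zconj; rw [conj_omega]; linear_combination ω * omega_pow_three

lemma zconj3 (k : ℂ) : (starRingEnd ℂ) (zfun 3 ((starRingEnd ℂ) k)) = zfun 3 k := by
  apply zconj; rw [conj_omega]; linear_combination ω ^ 3 * omega_pow_three

lemma zflip (j m : ℕ) (h : ω ^ (j + m) = 1) (k : ℂ) (hk : k ≠ 0) :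
    zfun j (1 / k) = zfun m k := by
  unfold zfun
  have hden : (1/k)^3 + ((1/k)^3)⁻¹ = k^3 + (k^3)⁻¹ := by
    rw [one_div, inv_pow, inv_inv, add_comm]
  rw [hden]
  congr 2
  apply addinv
  rw [← mul_pow, show ω^j*(1/k)*(ω^m*k) = ω^(j+m) * (k * k⁻¹) by rw [pow_add]; ring,
    mul_inv_cancel₀ hk, mul_one, h, one_pow]

lemma omega_pow_six : ω ^ (3 + 3 : ℕ) = 1 := by
  linear_combination (ω ^ 3 + 1) * omega_pow_three

lemma diag3 (a b c : ℂ) : Matrix.diagonal ![a,b,c] = !![a,0,0;0,b,0;0,0,c] := by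
  ext i j
  fin_cases i <;> fin_cases j <;>
    simp [Matrix.diagonal, Matrix.vecHead, Matrix.vecTail]

lemma map3 (a b c : ℂ) : (!![a,0,0;0,b,0;0,0,c]).map (starRingEnd ℂ)
    = !![(starRingEnd ℂ) a,0,0;0,(starRingEnd ℂ) b,0;0,0,(starRingEnd ℂ) c] := by
  ext i j
  fin_cases i <;> fin_cases j <;> simp [Matrix.vecHead, Matrix.vecTail]

/-- The symmetries `𝒵(k) = 𝒜 𝒵(ωk) 𝒜⁻¹`, `𝒵(k) = ℬ conj(𝒵(conj k)) ℬ`,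
and `𝒵(k) = ℬ 𝒵(1/k) ℬ` of `𝒵(k) = diag(z₁(k), z₂(k), z₃(k))`. -/
theorem Zcal_symmetries (k : ℂ) (hk : k ≠ 0) (hk6 : k ^ 6 ≠ -1) :
    (Matrix.diagonal ![zfun 1 k, zfun 2 k, zfun 3 k]
        = matA * Matrix.diagonal ![zfun 1 (ω * k), zfun 2 (ω * k), zfun 3 (ω * k)] * matA⁻¹) ∧
    (Matrix.diagonal ![zfun 1 k, zfun 2 k, zfun 3 k]
        = matB * (Matrix.diagonal ![zfun 1 ((starRingEnd ℂ) k), zfun 2 ((starRingEnd ℂ) k),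
            zfun 3 ((starRingEnd ℂ) k)]).map (starRingEnd ℂ) * matB) ∧
    (Matrix.diagonal ![zfun 1 k, zfun 2 k, zfun 3 k]
        = matB * Matrix.diagonal ![zfun 1 (1 / k), zfun 2 (1 / k), zfun 3 (1 / k)] * matB) := by
  have hAinv : matA⁻¹ = !![0,1,0;0,0,1;1,0,0] := by
    apply Matrix.inv_eq_right_inv
    simp [matA, Matrix.mul_fin_three, Matrix.one_fin_three]
  refine ⟨?_, ?_, ?_⟩
  · rw [zshift1, zshift2, zshift3, hAinv, diag3, diag3, matA]
    simp [Matrix.mul_fin_three]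
  · rw [diag3, diag3, map3, zconj1, zconj2, zconj3, matB]
    simp [Matrix.mul_fin_three]
  · have h21 : ω ^ (2 + 1 : ℕ) = 1 := omega_pow_three
    rw [zflip 1 2 omega_pow_three k hk, zflip 2 1 h21 k hk, zflip 3 3 omega_pow_six k hk,
      diag3, diag3, matB]
    simp [Matrix.mul_fin_three]
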